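/- Let 1 < α < 2, h > 0, λ ≥ 0, and let γ₁, γ₂, γ₃ be arbitrary real numbers. Then the series ∑_{m=0}^{∞} g_m^{(α)} converges and ∑_{m=0}^{∞} g_m^{(α)} = (γ₁ e^{hλ} + γ₂ + γ₃ e^{−hλ}) (1 − e^{−hλ})^{α}. -/

import Mathlib

/-
With `x = e^{-hλ} ∈ (0, 1]` and `c_k = w_k^{(α)} x^k`, the tail `g_{k+2}` is the combination
`γ₁ e^{hλ} c_{k+2} + γ₂ c_{k+1} + γ₃ x c_k`, and the first two weights exactly compensate the
missing initial terms, so `∑ g = (γ₁ e^{hλ} + γ₂ + γ₃ x) ∑ c`. For `x < 1`, `∑ c = (1 - x)^α` is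
the binomial series. At `x = 1` (i.e. `λ = 0`) one is on the boundary of the disc of
convergence: there Pascal's rule gives `∑_{m ≤ n} w_m^{(α)} = w_n^{(α-1)}`, which tends to `0`
for `0 ≤ α - 1 ≤ 1`, and since `w_k^{(α)} ≥ 0` for `k ≥ 2` this convergence is unconditional.
-/

/-- Normalized Grünwald weights `w_k^{(α)} = (-1)^k (α choose k)`. -/
noncomputable def wgt (α : ℝ) (k : ℕ) : ℝ :=
  (-1 : ℝ) ^ k * (∏ i ∈ Finset.range k, (α - i)) / (Nat.factorial k)

/-- Tempered-WSGD weights: `g_0 = γ₁ e^{hλ}`, `g_1 = γ₁ w_1 + γ₂ w_0`,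
`g_k = (γ₁ w_k + γ₂ w_{k-1} + γ₃ w_{k-2}) e^{-(k-1)hλ}` for `k ≥ 2`. -/
noncomputable def gwt (α γ₁ γ₂ γ₃ h lam : ℝ) : ℕ → ℝ
  | 0 => γ₁ * Real.exp (h * lam)
  | 1 => γ₁ * wgt α 1 + γ₂ * wgt α 0
  | (k + 2) => (γ₁ * wgt α (k + 2) + γ₂ * wgt α (k + 1) + γ₃ * wgt α k) *
      Real.exp (-(((k : ℝ) + 1) * h * lam))

open Finset Filter Topology

theorem hasSum_of_tendsto_sum_range_of_nonneg_add {f : ℕ → ℝ} {l : ℝ} (k : ℕ)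
    (hf : ∀ n, 0 ≤ f (n + k)) (h : Tendsto (fun n => ∑ i ∈ range n, f i) atTop (𝓝 l)) :
    HasSum f l := by
  rw [← hasSum_nat_add_iff' k, hasSum_iff_tendsto_nat_of_nonneg hf]
  have hsplit (n : ℕ) :
      ∑ i ∈ range n, f (i + k) = ∑ i ∈ range (k + n), f i - ∑ i ∈ range k, f i := by
    simp [sum_range_add, add_comm]
  simp only [hsplit]
  exact ((h.comp (tendsto_add_atTop_nat k)).congr fun n => by simp [add_comm]).sub_const _

theorem HasSum.combination_of_shifts {R : Type*} [Ring R] [TopologicalSpace R]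
    [IsTopologicalRing R] {c : ℕ → R} {S : R} (hc : HasSum c S) (a b d : R) :
    HasSum (fun k => a * c (k + 2) + b * c (k + 1) + d * c k)
      ((a + b + d) * S - a * (c 0 + c 1) - b * c 0) := by
  have h₂ := (hasSum_nat_add_iff' 2).mpr (hc.mul_left a)
  have h₁ := (hasSum_nat_add_iff' 1).mpr (hc.mul_left b)
  convert (h₂.add h₁).add (hc.mul_left d) using 1
  · rfl -- the `AddCommMonoid` instances via `Ring` and via `AddCommGroup` agree
  · simp only [sum_range_succ, sum_range_zero]
    noncomm_ring

@[simp] theorem wgt_zero (α : ℝ) : wgt α 0 = 1 := by simp [wgt]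

@[simp] theorem wgt_one (α : ℝ) : wgt α 1 = -α := by simp [wgt]

theorem wgt_succ (α : ℝ) (n : ℕ) : wgt α (n + 1) = wgt α n * (n - α) / (n + 1) := by
  simp only [wgt, prod_range_succ, Nat.factorial_succ, pow_succ]
  push_cast
  field_simp
  ring

theorem wgt_eq_neg_one_pow_mul_choose (α : ℝ) (n : ℕ) :
    wgt α n = (-1) ^ n * Ring.choose α n := by
  rw [wgt, Ring.choose_eq_smul, ← Polynomial.aeval_eq_smeval, Polynomial.aeval_def,
    Polynomial.eval₂_eq_eval_map, descPochhammer_map, descPochhammer_eval_eq_prod_range,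
    smul_eq_mul]
  ring

theorem wgt_succ_eq_sub (α : ℝ) (n : ℕ) :
    wgt α (n + 1) = wgt (α - 1) (n + 1) - wgt (α - 1) n := by
  have h := Ring.choose_succ_succ (α - 1) n
  rw [sub_add_cancel] at h
  simp only [wgt_eq_neg_one_pow_mul_choose, h, pow_succ]
  ring

theorem sum_range_succ_wgt (α : ℝ) (n : ℕ) :
    ∑ m ∈ range (n + 1), wgt α m = wgt (α - 1) n := by
  induction n with
  | zero => simp
  | succ n ih => rw [sum_range_succ, ih, wgt_succ_eq_sub]; ring

theorem hasSum_wgt_mul_pow {α x : ℝ} (hx : |x| < 1) :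
    HasSum (fun n => wgt α n * x ^ n) ((1 - x) ^ α) := by
  have hx' : -x ∈ Metric.eball (0 : ℝ) 1 := by
    simpa [enorm_eq_nnnorm, ← NNReal.coe_lt_coe] using hx
  have h := (Real.one_add_rpow_hasFPowerSeriesOnBall_zero (a := α)).hasSum hx'
  simp only [FormalMultilinearSeries.apply_eq_pow_smul_coeff, binomialSeries,
    FormalMultilinearSeries.coeff_ofScalars, smul_eq_mul, zero_add] at h
  have e (n : ℕ) : wgt α n * x ^ n = (-x) ^ n * Ring.choose α n := by
    rw [wgt_eq_neg_one_pow_mul_choose, neg_pow]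
    ring
  simpa only [e, ← sub_eq_add_neg] using h

theorem abs_wgt_succ_le {β : ℝ} (hβ₀ : 0 ≤ β) (hβ₁ : β ≤ 1) (n : ℕ) :
    |wgt β (n + 1)| ≤ β / (n + 1) := by
  induction n with
  | zero => simp [abs_of_nonneg hβ₀]
  | succ n ih =>
    have hn : (0 : ℝ) ≤ n + 1 - β := by linarith [n.cast_nonneg (α := ℝ)]
    rw [wgt_succ]
    push_cast
    rw [abs_div, abs_mul, abs_of_nonneg hn, abs_of_pos (by positivity : (0 : ℝ) < n + 1 + 1)]
    calc |wgt β (n + 1)| * (n + 1 - β) / (n + 1 + 1)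
        ≤ β / (n + 1) * (n + 1 - β) / (n + 1 + 1) := by gcongr
      _ ≤ β / (n + 1 + 1) := by
        gcongr
        rw [div_mul_eq_mul_div, div_le_iff₀ (by positivity)]
        nlinarith

theorem tendsto_wgt_atTop {β : ℝ} (hβ₀ : 0 ≤ β) (hβ₁ : β ≤ 1) :
    Tendsto (wgt β) atTop (𝓝 0) := by
  rw [← tendsto_add_atTop_iff_nat 1]
  refine squeeze_zero_norm (fun n => ?_)
    ((tendsto_const_div_atTop_nhds_zero_nat β).comp (tendsto_add_atTop_nat 1))
  simpa using abs_wgt_succ_le hβ₀ hβ₁ n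

theorem wgt_add_two_nonneg {α : ℝ} (hα₁ : 1 ≤ α) (hα₂ : α ≤ 2) (n : ℕ) :
    0 ≤ wgt α (n + 2) := by
  induction n with
  | zero => rw [wgt_succ, wgt_succ]; norm_num; nlinarith
  | succ n ih =>
    rw [wgt_succ]
    have : (0 : ℝ) ≤ ↑(n + 2) - α := by push_cast; linarith [n.cast_nonneg (α := ℝ)]
    positivity

theorem hasSum_wgt {α : ℝ} (hα₁ : 1 ≤ α) (hα₂ : α ≤ 2) : HasSum (wgt α) 0 := by
  refine hasSum_of_tendsto_sum_range_of_nonneg_add 2 (wgt_add_two_nonneg hα₁ hα₂) ?_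
  rw [← tendsto_add_atTop_iff_nat 1]
  simp only [sum_range_succ_wgt]
  exact tendsto_wgt_atTop (by linarith) (by linarith)

theorem hasSum_wgt_mul_pow_of_le_one {α x : ℝ} (hα₁ : 1 ≤ α) (hα₂ : α ≤ 2)
    (hx₀ : -1 < x) (hx₁ : x ≤ 1) :
    HasSum (fun n => wgt α n * x ^ n) ((1 - x) ^ α) := by
  rcases hx₁.lt_or_eq with hx₁ | rfl
  · exact hasSum_wgt_mul_pow (abs_lt.mpr ⟨hx₀, hx₁⟩)
  · simpa [Real.zero_rpow (by linarith : α ≠ 0)] using hasSum_wgt hα₁ hα₂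

theorem gwt_add_two (α γ₁ γ₂ γ₃ h lam : ℝ) (k : ℕ) :
    gwt α γ₁ γ₂ γ₃ h lam (k + 2) =
      γ₁ * Real.exp (h * lam) * (wgt α (k + 2) * Real.exp (-(h * lam)) ^ (k + 2)) +
      γ₂ * (wgt α (k + 1) * Real.exp (-(h * lam)) ^ (k + 1)) +
      γ₃ * Real.exp (-(h * lam)) * (wgt α k * Real.exp (-(h * lam)) ^ k) := by
  have hinv : Real.exp (h * lam) = (Real.exp (-(h * lam)))⁻¹ := by rw [Real.exp_neg, inv_inv]
  have hpow : Real.exp (-((k + 1) * h * lam)) = Real.exp (-(h * lam)) ^ (k + 1) := by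
    rw [← Real.exp_nat_mul]
    push_cast
    ring_nf
  rw [gwt, hinv, hpow]
  field_simp
  ring

theorem gwt_hasSum (α γ₁ γ₂ γ₃ h lam : ℝ)
    (hα₁ : 1 < α) (hα₂ : α < 2) (hh : 0 < h) (hlam : 0 ≤ lam) :
    HasSum (gwt α γ₁ γ₂ γ₃ h lam)
      ((γ₁ * Real.exp (h * lam) + γ₂ + γ₃ * Real.exp (-(h * lam))) *
        (1 - Real.exp (-(h * lam))) ^ α) := by
  have hx₁ : Real.exp (-(h * lam)) ≤ 1 :=
    Real.exp_le_one_iff.mpr (neg_nonpos.mpr (mul_nonneg hh.le hlam))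
  have hx₀ : -1 < Real.exp (-(h * lam)) := by linarith [Real.exp_pos (-(h * lam))]
  have hc := hasSum_wgt_mul_pow_of_le_one hα₁.le hα₂.le hx₀ hx₁
  rw [← hasSum_nat_add_iff' 2]
  convert hc.combination_of_shifts (γ₁ * Real.exp (h * lam)) γ₂ (γ₃ * Real.exp (-(h * lam)))
    using 1
  · rfl
  · exact funext (gwt_add_two α γ₁ γ₂ γ₃ h lam)
  · have hexp : Real.exp (h * lam) * Real.exp (-(h * lam)) = 1 := by
      rw [← Real.exp_add, add_neg_cancel, Real.exp_zero]
    simp only [sum_range_succ, sum_range_zero, gwt, wgt_zero, wgt_one]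
    linear_combination -γ₁ * α * hexp
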